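/- arXiv:2304.02864 — 2 statements merged into one kernel-verified Lean document; each statement's English description precedes it below -/
import Mathlib

section
/- The girth of X = J(v,k,i) is given by: g(X) = 3 if v ≥ 3(k − i); g(X) = 4 if v < 3(k − i) and (v,k,i) ≠ (2k+1,k,0); g(X) = 5 if (v,k,i) = (5,2,0); and g(X) = 6 if (v,k,i) = (2k+1,k,0) with k > 2. -/
/-- The generalized Johnson graph `J(v,k,i)`: vertices are the `k`-element subsets of a
`v`-element set, two vertices adjacent iff their intersection has exactly `i` elements. -/
def genJohnsonGraph (v k i : ℕ) :
    SimpleGraph {A : Finset (Fin v) // A.card = k} where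
  Adj A B := A ≠ B ∧ (A.1 ∩ B.1).card = i
  symm := by
    refine ⟨?_⟩
    rintro A B ⟨hne, hcard⟩
    exact ⟨hne.symm, by rwa [Finset.inter_comm]⟩
  loopless := by refine ⟨?_⟩; rintro A ⟨hne, -⟩; exact hne rfl

/-!
Both bounds are counts of points of the ground set. A triangle needs `3(k - i)` points by
inclusion–exclusion. In `J(2k+1,k,0)` the two diagonals `A ∪ C` and `B ∪ D` of a 4-cycle are
disjoint sets of size at least `k + 1`, and two vertices at distance two share at least `k - 1`
points, so in a 5-cycle `A,B,C,D,E` the sets `A ∩ C` and `C ∩ E` would be disjoint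
`(k-1)`-subsets of `C`.

The short cycles are realised as Venn diagrams: each vertex of the cycle is a union of blocks
whose sizes give the prescribed intersection sizes, and the blocks are then embedded in the
ground set. For instance, with `|P| = |Q| = k - 1` the sets
`P ∪ {x}, Q ∪ {y}, P ∪ {z}, Q ∪ {x}, P ∪ {y}, Q ∪ {z}` form a 6-cycle of `J(2k+1,k,0)`.
-/

open Finset Function SimpleGraph

namespace SimpleGraph

variable {V : Type*} {G : SimpleGraph V}

theorem girth_eq_of_cycleGraph_isContained {n : ℕ} (hn : 2 < n) (h : cycleGraph n ⊑ G)
    (hmin : ∀ m, 2 < m → m < n → ¬cycleGraph m ⊑ G) : G.girth = n := by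
  obtain ⟨a, w, hw, rfl⟩ := (cycleGraph_isContained_iff hn).1 h
  obtain ⟨b, w', hw', hgirth⟩ := exists_girth_eq_length.2 fun hG => hG w hw
  refine le_antisymm (girth_le_length hw) (hgirth ▸ ?_)
  by_contra! hlt
  exact hmin _ hw'.three_le_length hlt
    ((cycleGraph_isContained_iff hw'.three_le_length).2 ⟨b, w', hw', rfl⟩)

theorem cycleGraph_isContained_of_adj {n : ℕ} (f : Fin (n + 2) → V)
    (hf : ∀ j l, ¬(cycleGraph (n + 2)).Adj j l → f j = f l → j = l)
    (hadj : ∀ j, G.Adj (f j) (f (j + 1))) : cycleGraph (n + 2) ⊑ G := by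
  have hom {u w} (h : (cycleGraph (n + 2)).Adj u w) : G.Adj (f u) (f w) := by
    rcases cycleGraph_adj.1 h with h | h <;> rw [sub_eq_iff_eq_add'] at h <;> subst h
    exacts [(hadj w).symm, hadj u]
  refine ⟨Hom.toCopy ⟨f, hom⟩ fun j l h => ?_⟩
  by_cases hjl : (cycleGraph (n + 2)).Adj j l
  exacts [absurd h (hom hjl).ne, hf j l hjl h]

end SimpleGraph

namespace Finset

variable {α : Type*} [DecidableEq α] {s t u : Finset α}

theorem card_add_card_add_card_le :
    #s + #t + #u ≤ #(s ∪ t ∪ u) + #(s ∩ t) + #(s ∩ u) + #(t ∩ u) := by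
  have hst := card_union_add_card_inter s t
  have hstu := card_union_add_card_inter (s ∪ t) u
  have hsub : #((s ∪ t) ∩ u) ≤ #(s ∩ u) + #(t ∩ u) :=
    union_inter_distrib_right s t u ▸ card_union_le _ _
  omega

theorem card_lt_card_union_of_ne (h : #s ≤ #t) (hne : s ≠ t) : #s < #(s ∪ t) :=
  card_lt_card <| ssubset_iff_subset_ne.2 ⟨subset_union_left, fun heq =>
    hne (eq_of_subset_of_card_le (heq ▸ subset_union_right) h).symm⟩

theorem card_add_card_add_card_le_card_inter [Fintype α] (hs : Disjoint s u) (ht : Disjoint t u) :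
    #s + #t + #u ≤ Fintype.card α + #(s ∩ t) := by
  have hst := card_union_add_card_inter s t
  have := card_union_of_disjoint (disjoint_union_left.2 ⟨hs, ht⟩)
  have := card_le_univ (s ∪ t ∪ u)
  omega

end Finset

section Blowup

variable {ι : Type*} (w : ι → ℕ)

def blowup (S : Finset ι) : Finset (Σ r, Fin (w r)) :=
  S.sigma fun _ => univ

theorem card_blowup (S : Finset ι) : #(blowup w S) = ∑ r ∈ S, w r := by
  simp [blowup]

theorem blowup_inter [DecidableEq ι] (S T : Finset ι) :
    blowup w S ∩ blowup w T = blowup w (S ∩ T) := by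
  ext
  simp [blowup]

theorem blowup_injective (hw : ∀ r, 0 < w r) : Injective (blowup w) := by
  intro S T h
  ext r
  simpa [blowup] using congrArg (⟨r, ⟨0, hw r⟩⟩ ∈ ·) h

end Blowup

section GenJohnson

variable {v k i : ℕ}

theorem disjoint_of_genJohnsonGraph_adj {A B : {A : Finset (Fin v) // #A = k}}
    (h : (genJohnsonGraph v k 0).Adj A B) : Disjoint A.1 B.1 :=
  disjoint_iff_inter_eq_empty.2 (card_eq_zero.1 h.2)

theorem not_cycleGraph_three_isContained_genJohnsonGraph (hv : v < 3 * (k - i)) :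
    ¬cycleGraph 3 ⊑ genJohnsonGraph v k i := by
  rintro ⟨f⟩
  have h01 := (f.toHom.map_adj (show (cycleGraph 3).Adj 0 1 by decide)).2
  have h02 := (f.toHom.map_adj (show (cycleGraph 3).Adj 0 2 by decide)).2
  have h12 := (f.toHom.map_adj (show (cycleGraph 3).Adj 1 2 by decide)).2
  have := card_add_card_add_card_le (s := (f 0).1) (t := (f 1).1) (u := (f 2).1)
  have := card_le_univ ((f 0).1 ∪ (f 1).1 ∪ (f 2).1)
  simp only [Copy.toHom_apply, (f _).2, Fintype.card_fin] at *
  omega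

theorem not_cycleGraph_four_isContained_genJohnsonGraph_odd :
    ¬cycleGraph 4 ⊑ genJohnsonGraph (2 * k + 1) k 0 := by
  rintro ⟨f⟩
  have hdisj {j l : Fin 4} (h : (cycleGraph 4).Adj j l) : Disjoint (f j).1 (f l).1 :=
    disjoint_of_genJohnsonGraph_adj (f.toHom.map_adj h)
  have hne {j l : Fin 4} (h : j ≠ l) : (f j).1 ≠ (f l).1 := fun h' =>
    h (f.injective (Subtype.ext h'))
  have h02 := card_lt_card_union_of_ne (by rw [(f 0).2, (f 2).2])
    (hne (show (0 : Fin 4) ≠ 2 by decide))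
  have h13 := card_lt_card_union_of_ne (by rw [(f 1).2, (f 3).2])
    (hne (show (1 : Fin 4) ≠ 3 by decide))
  have hdiag : Disjoint ((f 0).1 ∪ (f 2).1) ((f 1).1 ∪ (f 3).1) := by
    simp only [disjoint_union_left, disjoint_union_right]
    exact ⟨⟨hdisj (by decide), hdisj (by decide)⟩, hdisj (by decide), hdisj (by decide)⟩
  have := card_union_of_disjoint hdiag
  have := card_le_univ ((f 0).1 ∪ (f 2).1 ∪ ((f 1).1 ∪ (f 3).1))
  simp only [(f _).2, Fintype.card_fin] at *
  omega

theorem le_card_inter_add_one_of_genJohnsonGraph_adj_adj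
    {A B C : {A : Finset (Fin (2 * k + 1)) // #A = k}}
    (hAB : (genJohnsonGraph (2 * k + 1) k 0).Adj A B)
    (hBC : (genJohnsonGraph (2 * k + 1) k 0).Adj B C) : k ≤ #(A.1 ∩ C.1) + 1 := by
  have := card_add_card_add_card_le_card_inter (disjoint_of_genJohnsonGraph_adj hAB)
    (disjoint_of_genJohnsonGraph_adj hBC).symm
  simp only [A.2, B.2, C.2, Fintype.card_fin] at this
  omega

theorem not_cycleGraph_five_isContained_genJohnsonGraph_odd (hk : 2 < k) :
    ¬cycleGraph 5 ⊑ genJohnsonGraph (2 * k + 1) k 0 := by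
  rintro ⟨f⟩
  have hadj {j l : Fin 5} (h : (cycleGraph 5).Adj j l) := f.toHom.map_adj h
  have h02 := le_card_inter_add_one_of_genJohnsonGraph_adj_adj
    (hadj (show (cycleGraph 5).Adj 0 1 by decide)) (hadj (show (cycleGraph 5).Adj 1 2 by decide))
  have h24 := le_card_inter_add_one_of_genJohnsonGraph_adj_adj
    (hadj (show (cycleGraph 5).Adj 2 3 by decide)) (hadj (show (cycleGraph 5).Adj 3 4 by decide))
  have h40 := disjoint_of_genJohnsonGraph_adj (hadj (show (cycleGraph 5).Adj 4 0 by decide))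
  have := card_union_of_disjoint (h40.symm.mono inter_subset_left inter_subset_right :
    Disjoint ((f 0).1 ∩ (f 2).1) ((f 2).1 ∩ (f 4).1))
  have := card_le_card (union_subset inter_subset_right inter_subset_left :
    (f 0).1 ∩ (f 2).1 ∪ (f 2).1 ∩ (f 4).1 ⊆ (f 2).1)
  simp only [Copy.toHom_apply, (f _).2] at *
  omega

theorem cycleGraph_isContained_genJohnsonGraph {β : Type*} [Fintype β] [DecidableEq β] {n : ℕ}
    (hβ : Fintype.card β ≤ v) (hik : i < k) (P : Fin (n + 2) → Finset β)
    (hP : ∀ j l, ¬(cycleGraph (n + 2)).Adj j l → P j = P l → j = l)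
    (hcard : ∀ j, #(P j) = k) (hinter : ∀ j, #(P j ∩ P (j + 1)) = i) :
    cycleGraph (n + 2) ⊑ genJohnsonGraph v k i := by
  obtain ⟨e⟩ := Function.Embedding.nonempty_of_card_le (hβ.trans_eq (Fintype.card_fin v).symm)
  refine cycleGraph_isContained_of_adj (fun j => ⟨(P j).map e, by rw [card_map, hcard]⟩)
    (fun j l hjl h => hP j l hjl (map_injective e (congrArg Subtype.val h)))
    fun j => ⟨fun h => ?_, by rw [← map_inter, card_map, hinter]⟩
  have := hinter j
  rw [← map_injective e (congrArg Subtype.val h), inter_self, hcard] at this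
  omega

theorem cycleGraph_isContained_genJohnsonGraph_of_blowup {ι : Type*} [Fintype ι] [DecidableEq ι]
    (w : ι → ℕ) {n : ℕ} (hw : ∑ r, w r ≤ v) (hik : i < k) (P : Fin (n + 2) → Finset ι)
    (hP : ∀ j l, ¬(cycleGraph (n + 2)).Adj j l → blowup w (P j) = blowup w (P l) → j = l)
    (hcard : ∀ j, ∑ r ∈ P j, w r = k) (hinter : ∀ j, ∑ r ∈ P j ∩ P (j + 1), w r = i) :
    cycleGraph (n + 2) ⊑ genJohnsonGraph v k i :=
  cycleGraph_isContained_genJohnsonGraph (by simpa using hw) hik _ hP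
    (by simpa [card_blowup] using hcard) (by simpa [blowup_inter, card_blowup] using hinter)

/-- `Sum.inl j` is the block private to vertex `j`, `Sum.inr (Sum.inl m)` the block shared by the
two vertices other than `m`, and `Sum.inr (Sum.inr ())` the block common to all three. Taking the
common block of size `t = max (2i - k) 0` keeps all sizes nonnegative and the ground set of size
`3(k - i)` or `2k - i`. -/
theorem cycleGraph_three_isContained_genJohnsonGraph (hik : i < k) (h2k : 2 * k ≤ v)
    (hv : 3 * (k - i) ≤ v) : cycleGraph 3 ⊑ genJohnsonGraph v k i := by
  set t := 2 * i - k
  set p := i - t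
  set s := k - i - p
  let w : Fin 3 ⊕ Fin 3 ⊕ Unit → ℕ :=
    Sum.elim (fun _ => s) (Sum.elim (fun _ => p) fun _ => t)
  let P (j : Fin 3) : Finset (Fin 3 ⊕ Fin 3 ⊕ Unit) :=
    {.inl j, .inr (.inl (j + 1)), .inr (.inl (j + 2)), .inr (.inr ())}
  have hinter (j : Fin 3) : P j ∩ P (j + 1) = {.inr (.inl (j + 2)), .inr (.inr ())} := by
    revert j
    decide
  have hsize : s + (p + (p + t)) = k := by omega
  have hshared : p + t = i := by omega
  have htotal : 3 * s + (3 * p + t) ≤ v := by omega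
  refine cycleGraph_isContained_genJohnsonGraph_of_blowup w (by simpa [w] using htotal) hik P
    (fun j l hjl _ => by simpa [cycleGraph_three_eq_top] using hjl)
    (fun j => by fin_cases j <;> simpa [P, w] using hsize)
    fun j => by simpa [hinter, w] using hshared

/-- Vertex `j` is `X_a ∪ {y_b}` with `(a, b) = h j`, where `|X_0| = |X_1| = k - 1`. -/
theorem cycleGraph_isContained_genJohnsonGraph_zero {n c : ℕ} (h : Fin (n + 2) → Fin 2 × Fin c)
    (hinj : Injective h) (hadj : ∀ j, (h j).1 ≠ (h (j + 1)).1 ∧ (h j).2 ≠ (h (j + 1)).2)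
    (hk : 2 ≤ k) (hv : 2 * (k - 1) + c ≤ v) : cycleGraph (n + 2) ⊑ genJohnsonGraph v k 0 := by
  let w : Fin 2 ⊕ Fin c → ℕ := Sum.elim (fun _ => k - 1) fun _ => 1
  let P (j : Fin (n + 2)) : Finset (Fin 2 ⊕ Fin c) := {.inl (h j).1, .inr (h j).2}
  have hw : ∀ r, 0 < w r := by
    rintro (_ | _) <;> simp only [w, Sum.elim_inl, Sum.elim_inr] <;> omega
  refine cycleGraph_isContained_genJohnsonGraph_of_blowup w (by simpa [w] using hv) (by omega) P
    (fun j l _ hjl => hinj ?_) (fun j => ?_) (fun j => ?_)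
  · have hP := blowup_injective w hw hjl
    simp only [P, Finset.ext_iff] at hP
    exact Prod.ext (by simpa using hP (.inl (h j).1)) (by simpa using hP (.inr (h j).2))
  · simpa [P, w] using Nat.sub_add_cancel (by omega : 1 ≤ k)
  · simp [P, w, (hadj j).1.symm, (hadj j).2.symm]

/-- The vertices `0, 1, 2, 3` are `A_0, B_0, A_1, B_1` of a `K_{2,2}`: `Sum.inr (s, t)` is the
block `A_s ∩ B_t`, and `Sum.inl 0`, `Sum.inl 1` are the blocks common to the `A`s and to the `B`s.
-/
theorem cycleGraph_four_isContained_genJohnsonGraph (hi : 0 < i) (hik : 2 * i < k)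
    (h2k : 2 * k ≤ v) : cycleGraph 4 ⊑ genJohnsonGraph v k i := by
  let w : Fin 2 ⊕ Fin 2 × Fin 2 → ℕ := Sum.elim (fun _ => k - 2 * i) fun _ => i
  let P : Fin 4 → Finset (Fin 2 ⊕ Fin 2 × Fin 2) :=
    ![{.inl 0, .inr (0, 0), .inr (0, 1)}, {.inl 1, .inr (0, 0), .inr (1, 0)},
      {.inl 0, .inr (1, 0), .inr (1, 1)}, {.inl 1, .inr (0, 1), .inr (1, 1)}]
  have hw : ∀ r, 0 < w r := by
    rintro (_ | _) <;> simp only [w, Sum.elim_inl, Sum.elim_inr] <;> omega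
  have hsize : k - 2 * i + (i + i) = k := by omega
  have htotal : 2 * (k - 2 * i) + 4 * i ≤ v := by omega
  refine cycleGraph_isContained_genJohnsonGraph_of_blowup w (by simpa [w] using htotal) (by omega) P
    (fun j l _ hjl => (by decide : Injective P) (blowup_injective w hw hjl))
    (fun j => by fin_cases j <;> simpa [P, w] using hsize) fun j => by fin_cases j <;> simp [P, w]

theorem cycleGraph_five_isContained_genJohnsonGraph_five_two_zero :
    cycleGraph 5 ⊑ genJohnsonGraph 5 2 0 :=
  cycleGraph_isContained_genJohnsonGraph (β := Fin 5) le_rfl (by norm_num)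
    ![{0, 1}, {2, 3}, {4, 0}, {1, 2}, {3, 4}] (by decide) (by decide) (by decide)

end GenJohnson

theorem girth_formula_general (v k i : ℕ) (hik : i < k)
    (h2k : 2 * k ≤ v) (hexc : ¬(v = 2 * k ∧ i = 0)) :
    (3 * (k - i) ≤ v → (genJohnsonGraph v k i).girth = 3) ∧
    (v < 3 * (k - i) → ¬(v = 2 * k + 1 ∧ i = 0) →
      (genJohnsonGraph v k i).girth = 4) ∧
    (v = 5 ∧ k = 2 ∧ i = 0 → (genJohnsonGraph v k i).girth = 5) ∧
    (v = 2 * k + 1 ∧ i = 0 ∧ 2 < k → (genJohnsonGraph v k i).girth = 6) := by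
  refine ⟨fun hv => ?_, fun hv hodd => ?_, ?_, ?_⟩
  · exact girth_eq_of_cycleGraph_isContained (by norm_num)
      (cycleGraph_three_isContained_genJohnsonGraph hik h2k hv) (by omega)
  · refine girth_eq_of_cycleGraph_isContained (by norm_num) ?_ fun m hm hm4 => ?_
    · rcases Nat.eq_zero_or_pos i with rfl | hi
      · exact cycleGraph_isContained_genJohnsonGraph_zero (c := 4)
          (fun j => (Fin.ofNat 2 j, j)) (by decide) (by decide) (by omega) (by omega)
      · exact cycleGraph_four_isContained_genJohnsonGraph hi (by omega) h2k
    · obtain rfl : m = 3 := by omega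
      exact not_cycleGraph_three_isContained_genJohnsonGraph hv
  · rintro ⟨rfl, rfl, rfl⟩
    refine girth_eq_of_cycleGraph_isContained (by norm_num)
      cycleGraph_five_isContained_genJohnsonGraph_five_two_zero fun m hm hm5 => ?_
    interval_cases m
    exacts [not_cycleGraph_three_isContained_genJohnsonGraph (by norm_num),
      not_cycleGraph_four_isContained_genJohnsonGraph_odd (k := 2)]
  · rintro ⟨rfl, rfl, hk⟩
    refine girth_eq_of_cycleGraph_isContained (by norm_num)
      (cycleGraph_isContained_genJohnsonGraph_zero (c := 3)
        (fun j : Fin 6 => (Fin.ofNat 2 j, Fin.ofNat 3 j)) (by decide) (by decide)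
        (by omega) (by omega)) fun m hm hm6 => ?_
    interval_cases m
    exacts [not_cycleGraph_three_isContained_genJohnsonGraph (by omega),
      not_cycleGraph_four_isContained_genJohnsonGraph_odd,
      not_cycleGraph_five_isContained_genJohnsonGraph_odd hk]

/-- The girth of `J(v,k,i)`: 3 if `v ≥ 3(k-i)`; 4 if `v < 3(k-i)` and
`(v,k,i) ≠ (2k+1,k,0)`; 5 if `(v,k,i) = (5,2,0)`; 6 if `(v,k,i) = (2k+1,k,0)` and `k > 2`. -/
theorem girth_formula (v k i : ℕ) (hik : i < k) (hkv : k < v)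
    (h2k : 2 * k ≤ v) (hexc : ¬(v = 2 * k ∧ i = 0)) :
    (3 * (k - i) ≤ v → (genJohnsonGraph v k i).girth = 3) ∧
    (v < 3 * (k - i) → ¬(v = 2 * k + 1 ∧ i = 0) →
      (genJohnsonGraph v k i).girth = 4) ∧
    (v = 5 ∧ k = 2 ∧ i = 0 → (genJohnsonGraph v k i).girth = 5) ∧
    (v = 2 * k + 1 ∧ i = 0 ∧ 2 < k → (genJohnsonGraph v k i).girth = 6) :=
  girth_formula_general v k i hik h2k hexc
end

section
/- Let A and B be vertices of X = J(v,k,i) and let x = |A ∩ B|. If x < i and x < k − Δ, then the distance between A and B in X equals 3. -/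
/-! A common neighbour `C` of `A` and `B` would give
`k = |C| ≤ |C ∩ A| + |C ∩ B| + |(A ∪ B)ᶜ| = 2i + v - 2k + x`, contradicting `x < k - Δ`; and `x < i`
rules out `A = B` and `A ~ B`. For the upper bound, exchange `i - x` points `W ⊆ A \ B` for points
`R ⊆ B \ A`: then `D = (A \ W) ∪ R` meets `B` in `i` points, and for an `i`-set `S ⊆ (A \ B) \ W`,
`C = S ∪ ((B \ A) \ R)` meets both `A` and `D` exactly in `S`. -/

open Finset

namespace SimpleGraph

variable {V : Type*} {G : SimpleGraph V} {a b : V}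

theorem dist_eq_three_of_two_lt_edist (p : G.Walk a b) (hp : p.length = 3)
    (h : 2 < G.edist a b) : G.dist a b = 3 := by
  have h3 : G.edist a b = 3 :=
    le_antisymm (by simpa [hp] using p.edist_le) (Order.add_one_le_of_lt h)
  simp [dist, h3]

end SimpleGraph

namespace Finset

variable {α : Type*} [DecidableEq α]

theorem card_le_card_inter_add_card_inter_add_card_compl [Fintype α] (A B C : Finset α) :
    #C ≤ #(C ∩ A) + #(C ∩ B) + #(A ∪ B)ᶜ := by
  calc #C ≤ #(C ∩ A ∪ C ∩ B ∪ (A ∪ B)ᶜ) := card_le_card fun a ha => by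
        simp only [mem_union, mem_inter, mem_compl]; tauto
    _ ≤ #(C ∩ A) + #(C ∩ B) + #(A ∪ B)ᶜ :=
        (card_union_le _ _).trans (Nat.add_le_add_right (card_union_le _ _) _)

theorem exists_card_inter_chain_of_card_inter_le {A B : Finset α} {k i : ℕ} (hA : #A = k)
    (hB : #B = k) (hAB : #(A ∩ B) ≤ i) (hik : 2 * i ≤ k) :
    ∃ C D : Finset α, #C = k ∧ #D = k ∧ #(A ∩ C) = i ∧ #(C ∩ D) = i ∧ #(D ∩ B) = i := by
  have hAsdiff : #(A \ B) = k - #(A ∩ B) := by rw [card_sdiff, inter_comm, hA]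
  have hBsdiff : #(B \ A) = k - #(A ∩ B) := by rw [card_sdiff, hB]
  obtain ⟨R, hR, hRcard⟩ := exists_subset_card_eq (s := B \ A) (n := i - #(A ∩ B)) (by omega)
  obtain ⟨W, hW, hWcard⟩ := exists_subset_card_eq (s := A \ B) (n := i - #(A ∩ B)) (by omega)
  obtain ⟨S, hS, hScard⟩ := exists_subset_card_eq (s := (A \ B) \ W) (n := i)
    (by rw [card_sdiff_of_subset hW]; omega)
  refine ⟨S ∪ ((B \ A) \ R), (A \ W) ∪ R, ?_, ?_, ?_, ?_, ?_⟩
  · rw [card_union_of_disjoint (by rw [disjoint_left]; grind),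
      card_sdiff_of_subset hR, hBsdiff, hScard, hRcard]
    omega
  · rw [card_union_of_disjoint (by rw [disjoint_left]; grind),
      card_sdiff_of_subset (hW.trans sdiff_subset), hRcard, hWcard]
    omega
  · rwa [show A ∩ (S ∪ (B \ A) \ R) = S by ext a; grind]
  · rwa [show (S ∪ (B \ A) \ R) ∩ (A \ W ∪ R) = S by ext a; grind]
  · rw [show (A \ W ∪ R) ∩ B = A ∩ B ∪ R by ext a; grind,
      card_union_of_disjoint (by rw [disjoint_left]; grind), hRcard]
    omega

end Finset

namespace genJohnsonGraph

variable {v k i : ℕ} {A B : {A : Finset (Fin v) // #A = k}}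

theorem ne_of_card_inter_ne (h : #(A.1 ∩ B.1) ≠ k) : A ≠ B := by
  rintro rfl
  exact h (by rw [inter_self, A.2])

theorem adj_of_card_inter_eq (hik : i ≠ k) (h : #(A.1 ∩ B.1) = i) :
    (genJohnsonGraph v k i).Adj A B :=
  ⟨ne_of_card_inter_ne (h ▸ hik), h⟩

theorem exists_walk_length_eq_three (hAB : #(A.1 ∩ B.1) ≤ i) (hik : 2 * i < k) :
    ∃ p : (genJohnsonGraph v k i).Walk A B, p.length = 3 := by
  obtain ⟨C, D, hC, hD, hAC, hCD, hDB⟩ :=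
    exists_card_inter_chain_of_card_inter_le A.2 B.2 hAB hik.le
  have hik_ne : i ≠ k := by omega
  exact ⟨.cons (adj_of_card_inter_eq (B := ⟨C, hC⟩) hik_ne hAC) <|
    .cons (adj_of_card_inter_eq (B := ⟨D, hD⟩) hik_ne hCD) <|
    .cons (adj_of_card_inter_eq hik_ne hDB) .nil, rfl⟩

theorem commonNeighbors_eq_empty (h : #(A.1 ∩ B.1) < k - (v - 2 * k + 2 * i)) :
    (genJohnsonGraph v k i).commonNeighbors A B = ∅ := by
  refine Set.eq_empty_of_forall_notMem fun C ⟨⟨_, hAC⟩, ⟨_, hBC⟩⟩ => ?_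
  have hC := card_le_card_inter_add_card_inter_add_card_compl A.1 B.1 C.1
  rw [inter_comm, hAC, inter_comm, hBC, C.2, card_compl, Fintype.card_fin] at hC
  have hunion := card_union_add_card_inter A.1 B.1
  have hle : #(A.1 ∪ B.1) ≤ v := card_le_univ _ |>.trans_eq (Fintype.card_fin v)
  rw [A.2, B.2] at hunion
  omega

end genJohnsonGraph

theorem dist_eq_three_general (v k i : ℕ)
    (A B : {A : Finset (Fin v) // A.card = k})
    (hxi : (A.1 ∩ B.1).card < i)
    (hxd : (A.1 ∩ B.1).card < k - (v - 2 * k + 2 * i)) :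
    (genJohnsonGraph v k i).dist A B = 3 := by
  obtain ⟨p, hp⟩ := genJohnsonGraph.exists_walk_length_eq_three hxi.le (by omega)
  exact SimpleGraph.dist_eq_three_of_two_lt_edist p hp <| SimpleGraph.two_lt_edist_iff.mpr
    ⟨genJohnsonGraph.ne_of_card_inter_ne (by omega), fun hadj => hxi.ne hadj.2,
      genJohnsonGraph.commonNeighbors_eq_empty hxd⟩

/-- If `x = |A ∩ B| < i` and `x < k - Δ`, then `dist(A,B) = 3` in `J(v,k,i)`. -/
theorem dist_eq_three (v k i : ℕ) (hik : i < k) (hkv : k < v)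
    (h2k : 2 * k ≤ v) (hexc : ¬(v = 2 * k ∧ i = 0))
    (A B : {A : Finset (Fin v) // A.card = k})
    (hxi : (A.1 ∩ B.1).card < i)
    (hxd : (A.1 ∩ B.1).card < k - (v - 2 * k + 2 * i)) :
    (genJohnsonGraph v k i).dist A B = 3 :=
  dist_eq_three_general v k i A B hxi hxd
end
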